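/- For every T > 0 there exists a constant C_T ∈ (0, ∞) such that for all t with 0 < t ≤ T and all x, y ∈ [0,1], the spatial derivative series of the Neumann heat kernel satisfies |2π·∑_{k=1}^∞ k·e^{−k²π²t}·sin(kπx)·cos(kπy)| ≤ C_T · t^{−1} · exp(−(x−y)²/(8t)); equivalently, |∂_x G^N_t(x,y)| ≤ C_T · t^{−1} · exp(−(x−y)²/(8t)). -/

import Mathlib

open Real MeasureTheory
open Complex


lemma abs_mul_exp_le {t : ℝ} (ht : 0 < t) (v : ℝ) :
    |v| * Real.exp (-(v^2/(16*t))) ≤ 2 * Real.sqrt t := by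
  have hs : 0 < Real.sqrt t := Real.sqrt_pos.mpr ht
  have hsq : Real.sqrt t * Real.sqrt t = t := Real.mul_self_sqrt ht.le
  have h1 := Real.add_one_le_exp (v^2/(16*t))
  have h3 : |v| ≤ 2*Real.sqrt t*(v^2/(16*t)) + 2*Real.sqrt t := by
    have h4 : 0 ≤ (2*Real.sqrt t*v^2 + 32*t*Real.sqrt t - 16*t*|v|)/(16*t) := by
      apply div_nonneg _ (by linarith)
      nlinarith [sq_nonneg (|v| - 4*Real.sqrt t), _root_.sq_abs v, abs_nonneg v]
    have h5 : (2*Real.sqrt t*v^2 + 32*t*Real.sqrt t - 16*t*|v|)/(16*t)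
        = 2*Real.sqrt t*(v^2/(16*t)) + 2*Real.sqrt t - |v| := by
      field_simp
      ring
    linarith [h5 ▸ h4]
  have key : |v| ≤ 2*Real.sqrt t * Real.exp (v^2/(16*t)) := by
    have h2 := mul_le_mul_of_nonneg_left h1 (by positivity : (0:ℝ) ≤ 2*Real.sqrt t)
    have h6 : 2*Real.sqrt t*(v^2/(16*t)+1) = 2*Real.sqrt t*(v^2/(16*t)) + 2*Real.sqrt t := by ring
    linarith
  rw [Real.exp_neg]
  rw [mul_inv_le_iff₀' (Real.exp_pos _)]
  linarith [key]

lemma sumZexp {c : ℝ} (hc : 0 < c) : Summable (fun n : ℤ => Real.exp (-((n:ℝ)^2/c))) := by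
  have hnat : Summable (fun n : ℕ => Real.exp (-((n:ℝ)^2/c))) := by
    refine Summable.of_nonneg_of_le (fun n => (Real.exp_pos _).le) (fun n => ?_)
      (summable_geometric_of_lt_one (Real.exp_pos (-(1/c))).le
        (Real.exp_lt_one_iff.mpr (neg_neg_iff_pos.mpr (by positivity))))
    rw [← Real.exp_nat_mul]
    apply Real.exp_le_exp.mpr
    rcases Nat.eq_zero_or_pos n with h | h
    · simp [h]
    · have h1 : (1:ℝ) ≤ n := by exact_mod_cast h
      have h2 : (n:ℝ)/c ≤ (n:ℝ)^2/c := by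
        apply div_le_div₀ (sq_nonneg _) (by nlinarith) hc le_rfl
      have h3 : (n:ℝ) * -(1/c) = -((n:ℝ)/c) := by ring
      rw [h3]
      linarith
  apply Summable.of_nat_of_neg
  · exact hnat
  · have : (fun n : ℕ => Real.exp (-(((-(n:ℤ)):ℝ))^2/c)) = fun n : ℕ => Real.exp (-((n:ℝ)^2/c)) := by
      funext n; push_cast; ring_nf
    simpa using hnat

lemma term_bound {T t u d : ℝ} (hT : 0 < T) (ht : 0 < t) (htT : t ≤ T)
    (hu : |u| ≤ 2) (hd : 0 ≤ d) (n : ℤ) (hn : d ≤ |u - 2*(n:ℝ)|) :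
    π * |u - 2*(n:ℝ)| * Real.exp (-((u-2*(n:ℝ))^2/(4*t))) ≤
      (2*π*Real.exp (1/(16*T)) * Real.sqrt t * Real.exp (-(d^2/(8*t)))) *
        Real.exp (-((n:ℝ)^2/(16*T))) := by
  set v : ℝ := u - 2*(n:ℝ) with hv
  have e1 : -(v^2/(4*t)) = -(v^2/(16*t)) + -(v^2/(16*t)) + -(v^2/(8*t)) := by
    field_simp; ring
  rw [e1, Real.exp_add, Real.exp_add]
  have h1 : |v| * Real.exp (-(v^2/(16*t))) ≤ 2 * Real.sqrt t := abs_mul_exp_le ht v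
  have h2 : Real.exp (-(v^2/(16*t))) ≤ Real.exp (1/(16*T)) * Real.exp (-((n:ℝ)^2/(16*T))) := by
    rw [← Real.exp_add, Real.exp_le_exp]
    by_cases hn1 : (n:ℝ)^2 ≤ 1
    · have hL : -(v^2/(16*t)) ≤ 0 := neg_nonpos.mpr (div_nonneg (sq_nonneg v) (by linarith))
      have hR : 0 ≤ 1/(16*T) + -((n:ℝ)^2/(16*T)) := by
        rw [show 1/(16*T) + -((n:ℝ)^2/(16*T)) = (1 - (n:ℝ)^2)/(16*T) by ring]
        apply div_nonneg (by linarith) (by linarith)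
      linarith
    · have hone : (1:ℝ) < (n:ℝ)^2 := lt_of_not_ge hn1
      have hZ : (1:ℤ) < n^2 := by exact_mod_cast hone
      have h2Z : (2:ℤ) ≤ |n| := by nlinarith [abs_nonneg n, _root_.sq_abs n]
      have h2R : (2:ℝ) ≤ |(n:ℝ)| := by exact_mod_cast h2Z
      have hvn : |(n:ℝ)| ≤ |v| := by
        calc |(n:ℝ)| ≤ 2*|(n:ℝ)| - 2 := by linarith
          _ ≤ |2*(n:ℝ)| - |u| := by rw [abs_mul, _root_.abs_two]; linarith
          _ ≤ |2*(n:ℝ) - u| := abs_sub_abs_le_abs_sub _ _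
          _ = |v| := by rw [hv, abs_sub_comm]
      have hsq : (n:ℝ)^2 ≤ v^2 := by
        nlinarith [abs_nonneg (n:ℝ), _root_.sq_abs v, _root_.sq_abs (n:ℝ)]
      have e2 : (n:ℝ)^2/(16*T) ≤ v^2/(16*t) := by
        apply div_le_div₀ (sq_nonneg v) hsq (by linarith) (by linarith)
      linarith [one_div_pos.mpr (by linarith : (0:ℝ) < 16*T)]
  have h3 : Real.exp (-(v^2/(8*t))) ≤ Real.exp (-(d^2/(8*t))) := by
    apply Real.exp_le_exp.mpr
    have hdv : d^2 ≤ v^2 := by nlinarith [_root_.sq_abs v]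
    apply neg_le_neg
    exact div_le_div₀ (sq_nonneg v) hdv (by linarith) (le_refl _)
  calc π * |v| * (Real.exp (-(v^2/(16*t))) * Real.exp (-(v^2/(16*t))) * Real.exp (-(v^2/(8*t))))
      = π * ((|v| * Real.exp (-(v^2/(16*t)))) * Real.exp (-(v^2/(16*t))) * Real.exp (-(v^2/(8*t)))) := by ring
    _ ≤ π * ((2 * Real.sqrt t) * (Real.exp (1/(16*T)) * Real.exp (-((n:ℝ)^2/(16*T)))) * Real.exp (-(d^2/(8*t)))) := by
        gcongr
    _ = (2*π*Real.exp (1/(16*T)) * Real.sqrt t * Real.exp (-(d^2/(8*t)))) * Real.exp (-((n:ℝ)^2/(16*T))) := by ring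

section main
variable {T t u d : ℝ}

lemma theta_norm_bound (hT : 0 < T) (ht : 0 < t) (htT : t ≤ T)
    (hu : |u| ≤ 2) (hd : 0 ≤ d) (hdist : ∀ n : ℤ, d ≤ |u - 2*(n:ℝ)|) :
    ‖jacobiTheta₂' ((u:ℂ)/2) (Complex.I * ((π:ℂ) * t))‖ ≤
      (2 * Real.exp (1/(16*T)) * (∑' n : ℤ, Real.exp (-((n:ℝ)^2/(16*T))))) * t⁻¹ *
        Real.exp (-(d^2/(8*t))) := by
  have hπ : (0:ℝ) < π := Real.pi_pos
  set s : ℝ := π * t with hs_def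
  have hs : 0 < s := by positivity
  have hsC : ((π:ℂ) * t) = ((s:ℝ):ℂ) := by push_cast [hs_def]; ring
  set z : ℂ := (u:ℂ)/2 with hz_def
  set τ : ℂ := Complex.I * ((s:ℝ):ℂ) with hτ_def
  rw [hsC]
  have hτim : 0 < τ.im := by simp [hτ_def, hs]
  have hτne : τ ≠ 0 := by
    simp [hτ_def, Complex.ext_iff, hs.ne']
  -- the transformed parameters
  have hσ : -1/τ = Complex.I * ((s⁻¹ : ℝ):ℂ) := by
    rw [div_eq_iff hτne, hτ_def]
    push_cast
    have : (s:ℂ) ≠ 0 := by exact_mod_cast hs.ne'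
    field_simp
    linear_combination (-1:ℂ) * Complex.I_sq
  have hw : z/τ = Complex.I * ((-(u/(2*s)) : ℝ):ℂ) := by
    rw [div_eq_iff hτne, hτ_def, hz_def]
    push_cast
    have : (s:ℂ) ≠ 0 := by exact_mod_cast hs.ne'
    field_simp
    linear_combination (u:ℂ) * Complex.I_sq
  have hσim : 0 < (-1/τ).im := by rw [hσ]; simp [hs]
  -- series for the bracket
  have h1 := hasSum_jacobiTheta₂'_term (z/τ) hσim
  have h2 := (hasSum_jacobiTheta₂_term (z/τ) hσim).mul_left (2*(π:ℂ)*Complex.I*z)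
  have hQ := h1.sub h2
  set bfun : ℤ → ℝ := fun n => π * |u - 2*(n:ℝ)| * Real.exp ((n*u - n^2)/t) with hbfun_def
  have hfn : ∀ n : ℤ, ‖jacobiTheta₂'_term n (z/τ) (-1/τ) -
      2*(π:ℂ)*Complex.I*z * jacobiTheta₂_term n (z/τ) (-1/τ)‖ = bfun n := by
    intro n
    have hcomb : jacobiTheta₂'_term n (z/τ) (-1/τ) -
        2*(π:ℂ)*Complex.I*z * jacobiTheta₂_term n (z/τ) (-1/τ)
        = (2*(π:ℂ)*Complex.I*(((n:ℝ) - u/2 : ℝ):ℂ)) * jacobiTheta₂_term n (z/τ) (-1/τ) := by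
      rw [jacobiTheta₂'_term, hz_def]
      push_cast
      ring
    rw [hcomb, norm_mul]
    have hnt : ‖jacobiTheta₂_term n (z/τ) (-1/τ)‖ = Real.exp ((n*u - n^2)/t) := by
      rw [norm_jacobiTheta₂_term n (z/τ) (-1/τ)]
      congr 1
      have him : ∀ r : ℝ, (Complex.I * (r:ℂ)).im = r := by
        intro r; simp
      have e1 : (-1/τ).im = s⁻¹ := by rw [hσ]; exact him _
      have e2 : (z/τ).im = -(u/(2*s)) := by rw [hw]; exact him _
      rw [e1, e2, hs_def]
      field_simp
      ring
    have hnc : ‖2*(π:ℂ)*Complex.I*(((n:ℝ) - u/2 : ℝ):ℂ)‖ = 2*π*|(n:ℝ) - u/2| := by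
      rw [show ((2:ℂ)*(π:ℂ)*Complex.I*(((n:ℝ) - u/2 : ℝ):ℂ)) = (((2*π:ℝ)):ℂ) * Complex.I * (((n:ℝ) - u/2 : ℝ):ℂ) by push_cast; ring]
      simp only [norm_mul, Complex.norm_real, Complex.norm_I, mul_one, Real.norm_eq_abs]
      rw [_root_.abs_two, abs_of_pos hπ]
    rw [hnt, hnc, hbfun_def]
    have habs : 2 * |(n:ℝ) - u/2| = |u - 2*(n:ℝ)| := by
      rw [show u - 2*(n:ℝ) = 2 * ((u/2) - n) by ring, abs_mul, _root_.abs_two, abs_sub_comm]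
    push_cast
    rw [← habs]
    ring
  set cfun : ℤ → ℝ := fun n => π * |u - 2*(n:ℝ)| * Real.exp (-((u-2*(n:ℝ))^2/(4*t))) with hcfun_def
  set M : ℝ := 2*π*Real.exp (1/(16*T)) * Real.sqrt t * Real.exp (-(d^2/(8*t))) with hM_def
  set S : ℝ := ∑' n : ℤ, Real.exp (-((n:ℝ)^2/(16*T))) with hS_def
  have hcb : ∀ n : ℤ, cfun n ≤ M * Real.exp (-((n:ℝ)^2/(16*T))) :=
    fun n => term_bound hT ht htT hu hd n (hdist n)
  have hsumM : Summable (fun n : ℤ => M * Real.exp (-((n:ℝ)^2/(16*T)))) :=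
    (sumZexp (by positivity)).mul_left M
  have hcnonneg : ∀ n : ℤ, 0 ≤ cfun n := fun n => by rw [hcfun_def]; positivity
  have hsumc : Summable cfun := Summable.of_nonneg_of_le hcnonneg hcb hsumM
  have hbc : ∀ n : ℤ, bfun n = cfun n * Real.exp (u^2/(4*t)) := by
    intro n
    have hexp : Real.exp (((n:ℝ)*u - (n:ℝ)^2)/t) =
        Real.exp (-((u-2*(n:ℝ))^2/(4*t))) * Real.exp (u^2/(4*t)) := by
      rw [← Real.exp_add]
      congr 1
      field_simp
      ring
    rw [hbfun_def, hcfun_def]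
    simp only
    rw [hexp]
    ring
  have hsumb : Summable bfun := by
    have heq : bfun = fun n => cfun n * Real.exp (u^2/(4*t)) := funext hbc
    rw [heq]; exact hsumc.mul_right _
  have hsumnorm : Summable (fun n : ℤ => ‖jacobiTheta₂'_term n (z/τ) (-1/τ) -
      2*(π:ℂ)*Complex.I*z * jacobiTheta₂_term n (z/τ) (-1/τ)‖) := by
    rwa [show (fun n : ℤ => ‖jacobiTheta₂'_term n (z/τ) (-1/τ) -
      2*(π:ℂ)*Complex.I*z * jacobiTheta₂_term n (z/τ) (-1/τ)‖) = bfun from funext hfn]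
  have hQle : ‖jacobiTheta₂' (z/τ) (-1/τ) - 2*(π:ℂ)*Complex.I*z * jacobiTheta₂ (z/τ) (-1/τ)‖
      ≤ ∑' n : ℤ, bfun n := by
    rw [← hQ.tsum_eq]
    refine (norm_tsum_le_tsum_norm hsumnorm).trans_eq ?_
    exact tsum_congr hfn
  have htsum_c_le : ∑' n : ℤ, cfun n ≤ M * S := by
    calc ∑' n : ℤ, cfun n ≤ ∑' n : ℤ, M * Real.exp (-((n:ℝ)^2/(16*T))) :=
        Summable.tsum_le_tsum hcb hsumc hsumM
      _ = M * S := by rw [hS_def, tsum_mul_left]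
  have htsum_bc : Real.exp (-(u^2/(4*t))) * ∑' n : ℤ, bfun n = ∑' n : ℤ, cfun n := by
    rw [← tsum_mul_left]
    refine tsum_congr fun n => ?_
    rw [hbc n, mul_comm (cfun n), ← mul_assoc, ← Real.exp_add]
    simp
  have hSnonneg : 0 ≤ S := tsum_nonneg (fun n => (Real.exp_pos _).le)
  have hMnonneg : 0 ≤ M := by rw [hM_def]; positivity
  -- functional equation
  have FE := jacobiTheta₂'_functional_equation z τ
  have hIt : -Complex.I * τ = ((s:ℝ):ℂ) := by
    rw [hτ_def]; linear_combination (-(s:ℂ))*Complex.I_sq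
  have harg : -(π:ℂ) * Complex.I * z^2 / τ = ((-(u^2/(4*t)) : ℝ):ℂ) := by
    rw [div_eq_iff hτne, hτ_def, hz_def]
    have htC : (t:ℂ) ≠ 0 := by exact_mod_cast ht.ne'
    push_cast [hs_def]
    field_simp
    ring
  have hpow : ((s:ℝ):ℂ)^(1/2:ℂ) = ((Real.sqrt s : ℝ):ℂ) := by
    rw [show (1/2:ℂ) = ((1/2:ℝ):ℂ) by norm_num, ← Complex.ofReal_cpow hs.le]
    rw [← Real.sqrt_eq_rpow]
  have hτnorm : ‖τ‖ = s := by
    rw [hτ_def]; simp only [norm_mul, Complex.norm_I, Complex.norm_real, Real.norm_eq_abs,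
      one_mul]; exact abs_of_pos hs
  rw [FE, hIt, harg, hpow]
  rw [norm_mul, norm_div, norm_mul, norm_div, norm_one, hτnorm, ← Complex.ofReal_exp,
    Complex.norm_real, Complex.norm_real, Real.norm_eq_abs, Real.norm_eq_abs,
    abs_of_pos (Real.exp_pos _), abs_of_pos (Real.sqrt_pos.mpr hs)]
  have hsqt : 0 < Real.sqrt t := Real.sqrt_pos.mpr ht
  have hsqs : 0 < Real.sqrt s := Real.sqrt_pos.mpr hs
  calc 1 / Real.sqrt s * Real.exp (-(u^2/(4*t))) / s *
        ‖jacobiTheta₂' (z/τ) (-1/τ) - 2*(π:ℂ)*Complex.I*z * jacobiTheta₂ (z/τ) (-1/τ)‖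
      ≤ 1 / Real.sqrt s * Real.exp (-(u^2/(4*t))) / s * (∑' n : ℤ, bfun n) := by
        gcongr
    _ = 1 / Real.sqrt s / s * (Real.exp (-(u^2/(4*t))) * ∑' n : ℤ, bfun n) := by ring
    _ = 1 / Real.sqrt s / s * (∑' n : ℤ, cfun n) := by rw [htsum_bc]
    _ ≤ 1 / Real.sqrt s / s * (M * S) := by
        gcongr
    _ ≤ 1 / Real.sqrt t / s * (M * S) := by
        gcongr
        · nlinarith [Real.pi_gt_three]
    _ = (2 * Real.exp (1/(16*T)) * S) * t⁻¹ * Real.exp (-(d^2/(8*t))) := by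
        rw [hM_def, hs_def]
        field_simp
end main


noncomputable def phiF (t u : ℝ) : ℕ → ℝ :=
  fun k => (k + 1 : ℝ) * Real.exp (-((k + 1 : ℝ) ^ 2 * π ^ 2 * t)) * Real.sin ((k + 1 : ℝ) * π * u)

lemma jacobi_term_eq (t u : ℝ) (m : ℤ) :
    jacobiTheta₂'_term m ((u : ℂ)/2) (Complex.I * ((π : ℂ) * t)) =
      (2 * π * m : ℝ) * Complex.I * ((Real.exp (-((m:ℝ)^2 * π^2 * t)) : ℝ) : ℂ) *
        (((Real.cos ((m:ℝ) * π * u) : ℝ) : ℂ) + ((Real.sin ((m:ℝ) * π * u) : ℝ) : ℂ) * Complex.I) := by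
  rw [jacobiTheta₂'_term, jacobiTheta₂_term]
  have h : 2 * (π:ℂ) * Complex.I * m * ((u:ℂ)/2) + (π:ℂ) * Complex.I * m^2 * (Complex.I * ((π:ℂ)*t)) =
      ((-((m:ℝ)^2 * π^2 * t) : ℝ) : ℂ) + (((m:ℝ) * π * u : ℝ) : ℂ) * Complex.I := by
    push_cast
    linear_combination (π:ℂ)^2 * (m:ℂ)^2 * (t:ℂ) * Complex.I_sq
  rw [h, Complex.exp_add, ← Complex.ofReal_exp]
  rw [Complex.exp_mul_I, ← Complex.ofReal_cos, ← Complex.ofReal_sin]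
  push_cast
  ring

lemma hasSum_phiF {t : ℝ} (ht : 0 < t) (u : ℝ) :
    HasSum (phiF t u)
      ((jacobiTheta₂' ((u : ℂ)/2) (Complex.I * ((π : ℂ) * t))).re / (-4 * π)) := by
  set z : ℂ := (u : ℂ)/2
  set τ : ℂ := Complex.I * ((π : ℂ) * t)
  have hτ : 0 < τ.im := by
    simp only [τ, Complex.mul_im, Complex.I_re, Complex.I_im]
    simp [Real.pi_pos.le, mul_pos Real.pi_pos ht]
  have h := (hasSum_jacobiTheta₂'_term z hτ).nat_add_neg
  have h0 : jacobiTheta₂'_term (0 : ℤ) z τ = 0 := by simp [jacobiTheta₂'_term]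
  rw [h0, add_zero] at h
  have key : ∀ n : ℕ, jacobiTheta₂'_term (n : ℤ) z τ + jacobiTheta₂'_term (-(n : ℤ)) z τ =
      (((-4 * π * n * Real.exp (-((n:ℝ)^2 * π^2 * t)) * Real.sin ((n:ℝ) * π * u)) : ℝ) : ℂ) := by
    intro n
    rw [jacobi_term_eq t u (n : ℤ), jacobi_term_eq t u (-(n : ℤ))]
    simp only [Int.cast_neg, Int.cast_natCast, neg_mul, neg_sq, Real.cos_neg, Real.sin_neg]
    push_cast
    linear_combination (4 * (π:ℂ) * (n:ℂ) * Complex.exp (-((n:ℂ)^2 * (π:ℂ)^2 * (t:ℂ))) *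
      Complex.sin ((n:ℂ) * (π:ℂ) * (u:ℂ))) * Complex.I_sq
  simp_rw [key] at h
  have hre : HasSum (fun n : ℕ => (-4 * π * n * Real.exp (-((n:ℝ)^2 * π^2 * t)) *
      Real.sin ((n:ℝ) * π * u))) ((jacobiTheta₂' z τ).re) := by
    have := h.mapL Complex.reCLM
    simpa only [Complex.reCLM_apply, Complex.ofReal_re] using this
  have hshift := (hasSum_nat_add_iff' (f := fun n : ℕ => (-4 * π * n * Real.exp (-((n:ℝ)^2 * π^2 * t)) *
      Real.sin ((n:ℝ) * π * u))) 1).mpr hre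
  simp only [Finset.range_one, Finset.sum_singleton, Nat.cast_zero, mul_zero, zero_mul,
    sub_zero] at hshift
  push_cast at hshift
  have heq : (fun n : ℕ => (-4 * π * ((n:ℝ)+1) * Real.exp (-(((n:ℝ)+1)^2 * π^2 * t)) *
      Real.sin (((n:ℝ)+1) * π * u))) = fun n => (-4 * π) * phiF t u n := by
    funext n; rw [phiF]; ring
  have hshift' : HasSum (fun n : ℕ => (-4 * π) * phiF t u n)
      ((jacobiTheta₂' z τ).re) := heq ▸ hshift
  have hthis := hshift'.div_const (-4 * π)
  have hfun : (fun n : ℕ => (-4 * π) * phiF t u n / (-4 * π)) = phiF t u := by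
    funext n
    have h4 : (π:ℝ) ≠ 0 := Real.pi_ne_zero
    field_simp
  rwa [hfun] at hthis


/-- The spatial-derivative series of the Neumann heat kernel on `[0,1]`:
termwise `x`-differentiation of `G^N_t(x,y) = 1 + 2 ∑_{k≥1} e^{-k²π²t} cos(kπx) cos(kπy)`
gives `∂_x G^N_t(x,y) = -2π ∑_{k≥1} k e^{-k²π²t} sin(kπx) cos(kπy)`, whose absolute value
equals that of `2π ∑_{k≥1} k e^{-k²π²t} sin(kπx) cos(kπy)`. -/
noncomputable def GNderivX (t x y : ℝ) : ℝ :=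
  2 * π * ∑' k : ℕ, (k + 1 : ℝ) * Real.exp (-((k + 1 : ℝ) ^ 2 * π ^ 2 * t)) *
      Real.sin ((k + 1 : ℝ) * π * x) * Real.cos ((k + 1 : ℝ) * π * y)

theorem neumann_kernel_space_derivative_bound (T : ℝ) (hT : 0 < T) :
    ∃ C : ℝ, 0 < C ∧ ∀ t x y : ℝ, 0 < t → t ≤ T →
      x ∈ Set.Icc (0 : ℝ) 1 → y ∈ Set.Icc (0 : ℝ) 1 →
      |GNderivX t x y| ≤ C * t⁻¹ * Real.exp (-(x - y) ^ 2 / (8 * t)) := by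
  set S : ℝ := ∑' n : ℤ, Real.exp (-((n:ℝ)^2/(16*T))) with hS_def
  set E : ℝ := Real.exp (1/(16*T)) with hE_def
  have hS0 : 0 ≤ S := tsum_nonneg fun n => (Real.exp_pos _).le
  have hE0 : 0 < E := Real.exp_pos _
  have hES : 0 ≤ E * S := mul_nonneg hE0.le hS0
  refine ⟨E * S + 1, by linarith, ?_⟩
  intro t x y ht htT hx hy
  obtain ⟨hx0, hx1⟩ := hx
  obtain ⟨hy0, hy1⟩ := hy
  have hd0 : (0:ℝ) ≤ |x - y| := abs_nonneg _
  have hdle : |x - y| ≤ 1 := abs_le.mpr ⟨by linarith, by linarith⟩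
  have hu1 : |x + y| ≤ 2 := abs_le.mpr ⟨by linarith, by linarith⟩
  have hu2 : |x - y| ≤ 2 := by linarith
  have hdist1 : ∀ n : ℤ, |x - y| ≤ |(x + y) - 2*(n:ℝ)| := by
    intro n
    by_cases h0 : n = 0
    · subst h0
      have : |x + y| = x + y := _root_.abs_of_nonneg (by linarith)
      push_cast
      rw [mul_zero, sub_zero, this]
      exact abs_le.mpr ⟨by linarith, by linarith⟩ |>.trans (le_refl _)
    · by_cases h1 : n = 1
      · subst h1
        push_cast
        rw [show (x + y) - 2*(1:ℝ) = -(2 - (x+y)) by ring, abs_neg,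
          _root_.abs_of_nonneg (by linarith : (0:ℝ) ≤ 2 - (x+y))]
        exact abs_le.mpr ⟨by linarith, by linarith⟩
      · have hn : n ≤ -1 ∨ 2 ≤ n := by omega
        rcases hn with hn | hn
        · have hnR : (n:ℝ) ≤ -1 := by exact_mod_cast hn
          rw [_root_.abs_of_nonneg (by linarith : (0:ℝ) ≤ (x + y) - 2*(n:ℝ))]
          linarith
        · have hnR : (2:ℝ) ≤ (n:ℝ) := by exact_mod_cast hn
          rw [show (x + y) - 2*(n:ℝ) = -(2*(n:ℝ) - (x+y)) by ring, abs_neg,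
            _root_.abs_of_nonneg (by linarith : (0:ℝ) ≤ 2*(n:ℝ) - (x+y))]
          linarith
  have hdist2 : ∀ n : ℤ, |x - y| ≤ |(x - y) - 2*(n:ℝ)| := by
    intro n
    by_cases h0 : n = 0
    · subst h0; push_cast; rw [mul_zero, sub_zero]
    · have hn : n ≤ -1 ∨ 1 ≤ n := by omega
      rcases hn with hn | hn
      · have hnR : (n:ℝ) ≤ -1 := by exact_mod_cast hn
        have hxy : -1 ≤ x - y := by linarith
        rw [_root_.abs_of_nonneg (by linarith : (0:ℝ) ≤ (x - y) - 2*(n:ℝ))]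
        have hxy2 : x - y ≤ 1 := by linarith
        linarith
      · have hnR : (1:ℝ) ≤ (n:ℝ) := by exact_mod_cast hn
        rw [show (x - y) - 2*(n:ℝ) = -(2*(n:ℝ) - (x-y)) by ring, abs_neg,
          _root_.abs_of_nonneg (by linarith : (0:ℝ) ≤ 2*(n:ℝ) - (x-y))]
        linarith
  have h1 := hasSum_phiF ht (x + y)
  have h2 := hasSum_phiF ht (x - y)
  have hb1 := theta_norm_bound hT ht htT hu1 hd0 hdist1
  have hb2 := theta_norm_bound hT ht htT hu2 hd0 hdist2
  set A : ℂ := jacobiTheta₂' (((x+y : ℝ):ℂ)/2) (Complex.I * ((π:ℂ) * t)) with hA_def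
  set B : ℂ := jacobiTheta₂' (((x-y : ℝ):ℂ)/2) (Complex.I * ((π:ℂ) * t)) with hB_def
  set r1 : ℝ := A.re / (-4*π) with hr1_def
  set r2 : ℝ := B.re / (-4*π) with hr2_def
  have hGN : GNderivX t x y = 2*π*((r1 + r2)/2) := by
    rw [GNderivX]
    congr 1
    rw [← ((h1.add h2).div_const 2).tsum_eq]
    refine tsum_congr fun k => ?_
    simp only [phiF]
    rw [show ((k:ℝ)+1)*π*(x+y) = ((k:ℝ)+1)*π*x + ((k:ℝ)+1)*π*y by ring,
      show ((k:ℝ)+1)*π*(x-y) = ((k:ℝ)+1)*π*x - ((k:ℝ)+1)*π*y by ring,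
      Real.sin_add, Real.sin_sub]
    push_cast
    ring
  have habs : ∀ w : ℂ, |w.re / (-4*π)| ≤ ‖w‖/(4*π) := by
    intro w
    rw [abs_div, show |(-4*π : ℝ)| = 4*π by
      rw [_root_.abs_of_nonpos (by nlinarith [Real.pi_pos] : (-4*π:ℝ) ≤ 0)]; ring]
    apply div_le_div₀ (norm_nonneg w) ?_ (by positivity) le_rfl
    exact Complex.abs_re_le_norm w
  have hDD : Real.exp (-(|x - y|^2/(8*t))) = Real.exp (-(x - y)^2/(8*t)) := by
    rw [_root_.sq_abs, neg_div]
  rw [hDD] at hb1 hb2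
  have hπ : (0:ℝ) < π := Real.pi_pos
  calc |GNderivX t x y| = π * |r1 + r2| := by
        rw [hGN, show 2*π*((r1+r2)/2) = π*(r1+r2) by ring, abs_mul, abs_of_pos hπ]
    _ ≤ π * (|r1| + |r2|) := mul_le_mul_of_nonneg_left (abs_add_le r1 r2) hπ.le
    _ ≤ π * (‖A‖/(4*π) + ‖B‖/(4*π)) := by
        apply mul_le_mul_of_nonneg_left _ hπ.le
        exact add_le_add (habs A) (habs B)
    _ ≤ π * ((2 * E * S) * t⁻¹ * Real.exp (-(x - y)^2/(8*t))/(4*π) +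
          (2 * E * S) * t⁻¹ * Real.exp (-(x - y)^2/(8*t))/(4*π)) := by
        apply mul_le_mul_of_nonneg_left _ hπ.le
        apply add_le_add <;>
          exact div_le_div₀ (by positivity) (by assumption) (by positivity) le_rfl
    _ = (E * S) * (t⁻¹ * Real.exp (-(x - y)^2/(8*t))) := by
        field_simp
        ring
    _ ≤ (E * S + 1) * (t⁻¹ * Real.exp (-(x - y)^2/(8*t))) := by
        apply mul_le_mul_of_nonneg_right (by linarith) (by positivity)
    _ = (E * S + 1) * t⁻¹ * Real.exp (-(x - y)^2/(8*t)) := by ring
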